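/- arXiv:1808.05792 — 2 statements merged into one kernel-verified Lean document; each statement's English description precedes it below -/
import Mathlib

section
/- Let C and C̃ be bivariate copulas with conditional copulas C(u₂|u₁) and C̃(u₂|u₁), and suppose C̃ is strictly more SI than C, i.e., the map ψ(u₁,u₂) = C̃⁻¹(C(u₂|u₁)|u₁) is strictly increasing in u₁ (and increasing in u₂). Then C(u₁,u₂) < C̃(u₁,u₂) for all (u₁,u₂) ∈ (0,1)². -/
/-!
Fix `u₂` and let `g t = C(t,u₂) - C̃(t,u₂)`, so that `g 0 = g 1 = 0` and
`g' = c(·,u₂) - c̃(·,u₂)`. At a critical point `t` of `g` we get `ψ(t,u₂) = u₂`, so strict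
monotonicity of `ψ(·,u₂)` leaves room for at most one. If `g u₁ = 0`, Rolle's theorem gives
critical points on both sides of `u₁`. If `g u₁ > 0`, the maximum of `g` is an interior critical
point `t` with `C(t,u₂) > C̃(t,u₂)`. Either `C(t,u₂) < t = C̃(t,1)`, and then `C̃(t,·)` takes the
value `C(t,u₂)` at some level `z > u₂`, so Rolle on `[0,t]` yields `ξ < t` with
`ψ(ξ,u₂) = z > ψ(t,u₂)`; or `C(·,u₂)` touches the diagonal at `t`, forcing `c(t,u₂) = 1`,
whereas `c̃(t,·)` is strictly increasing and bounded by `1`.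
-/

/-- A bivariate copula: boundary conditions and 2-increasingness. -/
def IsCopula (C : ℝ → ℝ → ℝ) : Prop :=
  (∀ u ∈ Set.Icc (0:ℝ) 1, C u 0 = 0 ∧ C 0 u = 0 ∧ C u 1 = u ∧ C 1 u = u) ∧
  (∀ u₁ u₂ v₁ v₂ : ℝ, u₁ ∈ Set.Icc (0:ℝ) 1 → u₂ ∈ Set.Icc (0:ℝ) 1 →
    v₁ ∈ Set.Icc (0:ℝ) 1 → v₂ ∈ Set.Icc (0:ℝ) 1 → u₁ ≤ u₂ → v₁ ≤ v₂ →
    0 ≤ C u₂ v₂ - C u₂ v₁ - C u₁ v₂ + C u₁ v₁)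

open Set

theorem lipschitzOnWith_one_of_monotoneOn {f : ℝ → ℝ} {s : Set ℝ} (hf : MonotoneOn f s)
    (hf' : MonotoneOn (fun x => x - f x) s) : LipschitzOnWith 1 f s := by
  refine LipschitzOnWith.of_dist_le_mul fun x hx y hy => ?_
  wlog hxy : x ≤ y generalizing x y
  · rw [dist_comm, dist_comm x]
    exact this y hy x hx (le_of_not_ge hxy)
  have h₁ := hf hx hy hxy
  have h₂ := hf' hx hy hxy
  simp only at h₂
  rw [NNReal.coe_one, one_mul, Real.dist_eq, Real.dist_eq, abs_of_nonpos (by linarith),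
    abs_of_nonpos (by linarith)]
  linarith

theorem HasDerivAt.nonneg_of_monotoneOn_of_isOpen {f : ℝ → ℝ} {f' x : ℝ} {s : Set ℝ}
    (hd : HasDerivAt f f' x) (hs : IsOpen s) (hx : x ∈ s) (hf : MonotoneOn f s) : 0 ≤ f' :=
  hd.hasDerivWithinAt.nonneg_of_monotoneOn (hs.preperfect x hx) hf

def HasCondCopula (C c : ℝ → ℝ → ℝ) : Prop :=
  ∀ v ∈ Ioo (0:ℝ) 1, ∀ t ∈ Ioo (0:ℝ) 1, HasDerivAt (fun s => C s v) (c t v) t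

namespace IsCopula

variable {C : ℝ → ℝ → ℝ}

theorem apply_zero_left {v : ℝ} (hC : IsCopula C) (hv : v ∈ Icc (0:ℝ) 1) : C 0 v = 0 :=
  (hC.1 v hv).2.1

theorem apply_one_left {v : ℝ} (hC : IsCopula C) (hv : v ∈ Icc (0:ℝ) 1) : C 1 v = v :=
  (hC.1 v hv).2.2.2

theorem apply_zero_right {u : ℝ} (hC : IsCopula C) (hu : u ∈ Icc (0:ℝ) 1) : C u 0 = 0 :=
  (hC.1 u hu).1

theorem apply_one_right {u : ℝ} (hC : IsCopula C) (hu : u ∈ Icc (0:ℝ) 1) : C u 1 = u :=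
  (hC.1 u hu).2.2.1

theorem swap (hC : IsCopula C) : IsCopula (fun u v => C v u) := by
  refine ⟨fun u hu => ?_, fun u₁ u₂ v₁ v₂ hu₁ hu₂ hv₁ hv₂ hu hv => ?_⟩
  · obtain ⟨h₁, h₂, h₃, h₄⟩ := hC.1 u hu
    exact ⟨h₂, h₁, h₄, h₃⟩
  · have := hC.2 v₁ v₂ u₁ u₂ hv₁ hv₂ hu₁ hu₂ hv hu
    linarith

theorem monotoneOn_sub {y z : ℝ} (hC : IsCopula C) (hy : y ∈ Icc (0:ℝ) 1) (hz : z ∈ Icc (0:ℝ) 1)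
    (hyz : y ≤ z) : MonotoneOn (fun t => C t z - C t y) (Icc 0 1) := by
  intro a ha b hb hab
  have := hC.2 a b y z ha hb hy hz hab hyz
  simp only
  linarith

theorem monotoneOn_left {v : ℝ} (hC : IsCopula C) (hv : v ∈ Icc (0:ℝ) 1) :
    MonotoneOn (fun t => C t v) (Icc 0 1) := by
  intro a ha b hb hab
  have := hC.monotoneOn_sub (left_mem_Icc.2 zero_le_one) hv hv.1 ha hb hab
  simpa only [hC.apply_zero_right ha, hC.apply_zero_right hb, sub_zero] using this

theorem monotoneOn_id_sub_left {v : ℝ} (hC : IsCopula C) (hv : v ∈ Icc (0:ℝ) 1) :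
    MonotoneOn (fun t => t - C t v) (Icc 0 1) := by
  intro a ha b hb hab
  have := hC.monotoneOn_sub hv (right_mem_Icc.2 zero_le_one) hv.2 ha hb hab
  simpa only [hC.apply_one_right ha, hC.apply_one_right hb] using this

theorem le_left {t v : ℝ} (hC : IsCopula C) (ht : t ∈ Icc (0:ℝ) 1) (hv : v ∈ Icc (0:ℝ) 1) :
    C t v ≤ t := by
  have := hC.monotoneOn_id_sub_left hv (left_mem_Icc.2 zero_le_one) ht ht.1
  simp only [hC.apply_zero_left hv, sub_zero] at this
  linarith

theorem continuousOn_left {v : ℝ} (hC : IsCopula C) (hv : v ∈ Icc (0:ℝ) 1) :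
    ContinuousOn (fun t => C t v) (Icc 0 1) :=
  (lipschitzOnWith_one_of_monotoneOn (hC.monotoneOn_left hv)
    (hC.monotoneOn_id_sub_left hv)).continuousOn

theorem continuousOn_right {u : ℝ} (hC : IsCopula C) (hu : u ∈ Icc (0:ℝ) 1) :
    ContinuousOn (fun v => C u v) (Icc 0 1) :=
  hC.swap.continuousOn_left hu

variable {c : ℝ → ℝ → ℝ}

theorem cond_le_one {t v : ℝ} (hC : IsCopula C) (hc : HasCondCopula C c) (ht : t ∈ Ioo (0:ℝ) 1)
    (hv : v ∈ Ioo (0:ℝ) 1) : c t v ≤ 1 := by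
  have := ((hasDerivAt_id t).sub (hc v hv t ht)).nonneg_of_monotoneOn_of_isOpen isOpen_Ioo ht
    ((hC.monotoneOn_id_sub_left (Ioo_subset_Icc_self hv)).mono Ioo_subset_Icc_self)
  linarith

theorem cond_mono {t y z : ℝ} (hC : IsCopula C) (hc : HasCondCopula C c) (ht : t ∈ Ioo (0:ℝ) 1)
    (hy : y ∈ Ioo (0:ℝ) 1) (hz : z ∈ Ioo (0:ℝ) 1) (hyz : y ≤ z) : c t y ≤ c t z := by
  have := ((hc z hz t ht).sub (hc y hy t ht)).nonneg_of_monotoneOn_of_isOpen isOpen_Ioo ht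
    ((hC.monotoneOn_sub (Ioo_subset_Icc_self hy) (Ioo_subset_Icc_self hz) hyz).mono
      Ioo_subset_Icc_self)
  linarith

theorem cond_strictMonoOn {t : ℝ} (hC : IsCopula C) (hc : HasCondCopula C c) (ht : t ∈ Ioo (0:ℝ) 1)
    (hinj : InjOn (c t) (Ioo 0 1)) : StrictMonoOn (c t) (Ioo 0 1) :=
  MonotoneOn.strictMonoOn_of_injOn (fun _ hy _ hz hyz => hC.cond_mono hc ht hy hz hyz) hinj

theorem cond_lt_one {t v : ℝ} (hC : IsCopula C) (hc : HasCondCopula C c) (ht : t ∈ Ioo (0:ℝ) 1)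
    (hinj : InjOn (c t) (Ioo 0 1)) (hv : v ∈ Ioo (0:ℝ) 1) : c t v < 1 := by
  have hw : (v + 1) / 2 ∈ Ioo (0:ℝ) 1 := ⟨by linarith [hv.1], by linarith [hv.2]⟩
  exact (hC.cond_strictMonoOn hc ht hinj hv hw (by linarith [hv.2])).trans_le
    (hC.cond_le_one hc ht hw)

end IsCopula

theorem le_of_cond_eq {C Ct c ct ctinv : ℝ → ℝ → ℝ} {t u₂ : ℝ} (hC : IsCopula C)
    (hCt : IsCopula Ct) (hc : HasCondCopula C c) (hct : HasCondCopula Ct ct)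
    (hinv : ∀ s ∈ Ioo (0:ℝ) 1, LeftInvOn (ctinv s) (ct s) (Ioo 0 1))
    (hSI : StrictMonoOn (fun s => ctinv s (c s u₂)) (Ioo 0 1)) (hu₂ : u₂ ∈ Ioo (0:ℝ) 1)
    (ht : t ∈ Ioo (0:ℝ) 1) (hcrit : c t u₂ = ct t u₂) : C t u₂ ≤ Ct t u₂ := by
  have ht' := Ioo_subset_Icc_self ht
  have hu₂' := Ioo_subset_Icc_self hu₂
  by_contra! hlt
  rcases (hC.le_left ht' hu₂').lt_or_eq with hdiag | hdiag
  · obtain ⟨z, hz, hzt⟩ : ∃ z ∈ Ioo u₂ 1, Ct t z = C t u₂ := by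
      refine intermediate_value_Ioo hu₂.2.le
        ((hCt.continuousOn_right ht').mono (Icc_subset_Icc hu₂.1.le le_rfl)) ⟨hlt, ?_⟩
      rwa [hCt.apply_one_right ht']
    have hz' : z ∈ Ioo (0:ℝ) 1 := ⟨hu₂.1.trans hz.1, hz.2⟩
    obtain ⟨ξ, hξ, hξ0⟩ := exists_hasDerivAt_eq_zero (f := fun s => Ct s z - C s u₂) ht.1
      (((hCt.continuousOn_left (Ioo_subset_Icc_self hz')).sub (hC.continuousOn_left hu₂')).mono
        (Icc_subset_Icc le_rfl ht.2.le))
      (by simp only [hCt.apply_zero_left (Ioo_subset_Icc_self hz'), hC.apply_zero_left hu₂', hzt,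
        sub_self])
      (fun x hx => (hct z hz' x ⟨hx.1, hx.2.trans ht.2⟩).sub (hc u₂ hu₂ x ⟨hx.1, hx.2.trans ht.2⟩))
    have hξ' : ξ ∈ Ioo (0:ℝ) 1 := ⟨hξ.1, hξ.2.trans ht.2⟩
    have hψ := hSI hξ' ht hξ.2
    simp only [← sub_eq_zero.1 hξ0, hinv ξ hξ' hz', hcrit, hinv t ht hu₂] at hψ
    linarith [hz.1]
  · have hmin : IsLocalMin (fun s => s - C s u₂) t := by
      filter_upwards [Icc_mem_nhds ht.1 ht.2] with s hs
      linarith [hC.le_left hs hu₂']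
    have := hmin.hasDerivAt_eq_zero ((hasDerivAt_id t).sub (hc u₂ hu₂ t ht))
    have := hCt.cond_lt_one hct ht (hinv t ht).injOn hu₂
    linarith

theorem eq_of_cond_eq {c ct ctinv : ℝ → ℝ → ℝ} {s t u₂ : ℝ}
    (hinv : ∀ s ∈ Ioo (0:ℝ) 1, LeftInvOn (ctinv s) (ct s) (Ioo 0 1))
    (hSI : StrictMonoOn (fun s => ctinv s (c s u₂)) (Ioo 0 1)) (hu₂ : u₂ ∈ Ioo (0:ℝ) 1)
    (hs : s ∈ Ioo (0:ℝ) 1) (ht : t ∈ Ioo (0:ℝ) 1) (hs_eq : c s u₂ = ct s u₂)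
    (ht_eq : c t u₂ = ct t u₂) : s = t :=
  hSI.injOn hs ht (by simp only [hs_eq, ht_eq, hinv s hs hu₂, hinv t ht hu₂])

theorem ne_of_strictMonoOn_condInv {C Ct c ct ctinv : ℝ → ℝ → ℝ} {u₁ u₂ : ℝ} (hC : IsCopula C)
    (hCt : IsCopula Ct) (hc : HasCondCopula C c) (hct : HasCondCopula Ct ct)
    (hinv : ∀ s ∈ Ioo (0:ℝ) 1, LeftInvOn (ctinv s) (ct s) (Ioo 0 1))
    (hSI : StrictMonoOn (fun s => ctinv s (c s u₂)) (Ioo 0 1)) (hu₂ : u₂ ∈ Ioo (0:ℝ) 1)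
    (hu₁ : u₁ ∈ Ioo (0:ℝ) 1) : C u₁ u₂ ≠ Ct u₁ u₂ := by
  intro heq
  have hu₂' := Ioo_subset_Icc_self hu₂
  set g := fun t => C t u₂ - Ct t u₂
  have hg : ContinuousOn g (Icc 0 1) :=
    (hC.continuousOn_left hu₂').sub (hCt.continuousOn_left hu₂')
  have hg' : ∀ t ∈ Ioo (0:ℝ) 1, HasDerivAt g (c t u₂ - ct t u₂) t :=
    fun t ht => (hc u₂ hu₂ t ht).sub (hct u₂ hu₂ t ht)
  have hg0 : g 0 = g u₁ := by
    simp only [g, hC.apply_zero_left hu₂', hCt.apply_zero_left hu₂', heq, sub_self]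
  have hg1 : g u₁ = g 1 := by
    simp only [g, hC.apply_one_left hu₂', hCt.apply_one_left hu₂', heq, sub_self]
  obtain ⟨ξ, hξ, hξ0⟩ := exists_hasDerivAt_eq_zero hu₁.1
    (hg.mono (Icc_subset_Icc le_rfl hu₁.2.le)) hg0 (fun x hx => hg' x ⟨hx.1, hx.2.trans hu₁.2⟩)
  obtain ⟨η, hη, hη0⟩ := exists_hasDerivAt_eq_zero hu₁.2
    (hg.mono (Icc_subset_Icc hu₁.1.le le_rfl)) hg1 (fun x hx => hg' x ⟨hu₁.1.trans hx.1, hx.2⟩)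
  have := eq_of_cond_eq hinv hSI hu₂ ⟨hξ.1, hξ.2.trans hu₁.2⟩ ⟨hu₁.1.trans hη.1, hη.2⟩
    (sub_eq_zero.1 hξ0) (sub_eq_zero.1 hη0)
  linarith [hξ.2, hη.1]

theorem le_of_strictMonoOn_condInv {C Ct c ct ctinv : ℝ → ℝ → ℝ} {u₁ u₂ : ℝ} (hC : IsCopula C)
    (hCt : IsCopula Ct) (hc : HasCondCopula C c) (hct : HasCondCopula Ct ct)
    (hinv : ∀ s ∈ Ioo (0:ℝ) 1, LeftInvOn (ctinv s) (ct s) (Ioo 0 1))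
    (hSI : StrictMonoOn (fun s => ctinv s (c s u₂)) (Ioo 0 1)) (hu₂ : u₂ ∈ Ioo (0:ℝ) 1)
    (hu₁ : u₁ ∈ Ioo (0:ℝ) 1) : C u₁ u₂ ≤ Ct u₁ u₂ := by
  by_contra! hlt
  have hu₂' := Ioo_subset_Icc_self hu₂
  set g := fun t => C t u₂ - Ct t u₂
  have hg : ContinuousOn g (Icc 0 1) :=
    (hC.continuousOn_left hu₂').sub (hCt.continuousOn_left hu₂')
  obtain ⟨t, ht, hmax⟩ := isCompact_Icc.exists_isMaxOn (nonempty_Icc.2 zero_le_one) hg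
  have hpos : 0 < g t := (sub_pos.2 hlt).trans_le (hmax (Ioo_subset_Icc_self hu₁))
  have hg0 : g 0 = 0 := by
    simp only [g, hC.apply_zero_left hu₂', hCt.apply_zero_left hu₂', sub_self]
  have hg1 : g 1 = 0 := by
    simp only [g, hC.apply_one_left hu₂', hCt.apply_one_left hu₂', sub_self]
  have ht' : t ∈ Ioo (0:ℝ) 1 :=
    ⟨ht.1.lt_of_ne (by rintro rfl; linarith), ht.2.lt_of_ne (by rintro rfl; linarith)⟩
  have hcrit := (hmax.isLocalMax (Icc_mem_nhds ht'.1 ht'.2)).hasDerivAt_eq_zero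
    ((hc u₂ hu₂ t ht').sub (hct u₂ hu₂ t ht'))
  have := le_of_cond_eq hC hCt hc hct hinv hSI hu₂ ht' (sub_eq_zero.1 hcrit)
  simp only [g] at hpos
  linarith

theorem strictly_more_SI_implies_pointwise_lt_general
    (C Ct : ℝ → ℝ → ℝ) (hC : IsCopula C) (hCt : IsCopula Ct)
    -- conditional copulas: `c u₁ u₂ = ∂C(u₁,u₂)/∂u₁`, similarly for `ct`
    (c ct : ℝ → ℝ → ℝ)
    (hc : ∀ u₂ ∈ Set.Ioo (0:ℝ) 1, ∀ u₁ ∈ Set.Ioo (0:ℝ) 1,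
      HasDerivAt (fun t => C t u₂) (c u₁ u₂) u₁)
    (hct : ∀ u₂ ∈ Set.Ioo (0:ℝ) 1, ∀ u₁ ∈ Set.Ioo (0:ℝ) 1,
      HasDerivAt (fun t => Ct t u₂) (ct u₁ u₂) u₁)
    -- inverse of the conditional copula `ct` in its second argument
    (ctinv : ℝ → ℝ → ℝ)
    (hinv : ∀ u₁ ∈ Set.Ioo (0:ℝ) 1, ∀ y ∈ Set.Ioo (0:ℝ) 1,
      ct u₁ (ctinv u₁ y) = y ∧ ctinv u₁ (ct u₁ y) = y)
    (ψ : ℝ → ℝ → ℝ)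
    (hψ : ∀ u₁ u₂, ψ u₁ u₂ = ctinv u₁ (c u₁ u₂))
    -- `C̃` strictly more SI than `C`: `ψ` strictly increasing in `u₁`
    (hSI : ∀ u₂ ∈ Set.Ioo (0:ℝ) 1, StrictMonoOn (fun u₁ => ψ u₁ u₂) (Set.Ioo 0 1)) :
    ∀ u₁ ∈ Set.Ioo (0:ℝ) 1, ∀ u₂ ∈ Set.Ioo (0:ℝ) 1, C u₁ u₂ < Ct u₁ u₂ := by
  obtain rfl : ψ = fun u₁ u₂ => ctinv u₁ (c u₁ u₂) := funext₂ hψ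
  have hleft : ∀ t ∈ Ioo (0:ℝ) 1, LeftInvOn (ctinv t) (ct t) (Ioo 0 1) :=
    fun t ht y hy => (hinv t ht y hy).2
  intro u₁ hu₁ u₂ hu₂
  exact lt_of_le_of_ne (le_of_strictMonoOn_condInv hC hCt hc hct hleft (hSI u₂ hu₂) hu₂ hu₁)
    (ne_of_strictMonoOn_condInv hC hCt hc hct hleft (hSI u₂ hu₂) hu₂ hu₁)

/-- If `C̃` is strictly more SI than `C` (i.e. the map
`ψ(u₁,u₂) = C̃⁻¹(C(u₂|u₁)|u₁)` is strictly increasing in `u₁` and increasing in `u₂`,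
where `C(u₂|u₁) = ∂C(u₁,u₂)/∂u₁` is the conditional copula), then
`C(u₁,u₂) < C̃(u₁,u₂)` for all `(u₁,u₂) ∈ (0,1)²`. -/
theorem strictly_more_SI_implies_pointwise_lt
    (C Ct : ℝ → ℝ → ℝ) (hC : IsCopula C) (hCt : IsCopula Ct)
    -- conditional copulas: `c u₁ u₂ = ∂C(u₁,u₂)/∂u₁`, similarly for `ct`
    (c ct : ℝ → ℝ → ℝ)
    (hc : ∀ u₂ ∈ Set.Ioo (0:ℝ) 1, ∀ u₁ ∈ Set.Ioo (0:ℝ) 1,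
      HasDerivAt (fun t => C t u₂) (c u₁ u₂) u₁)
    (hct : ∀ u₂ ∈ Set.Ioo (0:ℝ) 1, ∀ u₁ ∈ Set.Ioo (0:ℝ) 1,
      HasDerivAt (fun t => Ct t u₂) (ct u₁ u₂) u₁)
    -- inverse of the conditional copula `ct` in its second argument
    (ctinv : ℝ → ℝ → ℝ)
    (hinv : ∀ u₁ ∈ Set.Ioo (0:ℝ) 1, ∀ y ∈ Set.Ioo (0:ℝ) 1,
      ct u₁ (ctinv u₁ y) = y ∧ ctinv u₁ (ct u₁ y) = y)
    (ψ : ℝ → ℝ → ℝ)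
    (hψ : ∀ u₁ u₂, ψ u₁ u₂ = ctinv u₁ (c u₁ u₂))
    -- `C̃` strictly more SI than `C`: `ψ` strictly increasing in `u₁`
    (hSI : ∀ u₂ ∈ Set.Ioo (0:ℝ) 1, StrictMonoOn (fun u₁ => ψ u₁ u₂) (Set.Ioo 0 1))
    -- and increasing in `u₂`
    (hmono : ∀ u₁ ∈ Set.Ioo (0:ℝ) 1, MonotoneOn (fun u₂ => ψ u₁ u₂) (Set.Ioo 0 1)) :
    ∀ u₁ ∈ Set.Ioo (0:ℝ) 1, ∀ u₂ ∈ Set.Ioo (0:ℝ) 1, C u₁ u₂ < Ct u₁ u₂ :=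
  strictly_more_SI_implies_pointwise_lt_general C Ct hC hCt c ct hc hct ctinv hinv ψ hψ hSI
end

section
/- Fix q ∈ (0,1) and t ∈ (0,1). Define t* = q + (1−q)t and s† = q·t. Then t* > t, s† < t, and the following observational-equivalence equations hold with the independence copula Π(u,v) = uv and the comonotone copula M(u,v) = min(u,v): (i) t − Π(t,q) = t* − M(t*, q); (ii) Π(t, q) = M(s†, q). -/
section OrderedRing

variable {α : Type*} [CommRing α] [LinearOrder α] [IsStrictOrderedRing α] {q t : α}

theorem lt_add_one_sub_mul (hq : 0 < q) (ht : t < 1) : t < q + (1 - q) * t := by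
  have hgap : q + (1 - q) * t - t = q * (1 - t) := by ring
  have : 0 < q * (1 - t) := mul_pos hq (sub_pos.2 ht)
  linarith

theorem min_add_one_sub_mul_eq_right (hq : q ≤ 1) (ht : 0 ≤ t) :
    min (q + (1 - q) * t) q = q :=
  min_eq_right (le_add_of_nonneg_right (mul_nonneg (sub_nonneg.2 hq) ht))

theorem sub_mul_eq_add_one_sub_mul_sub_min (hq : q ≤ 1) (ht : 0 ≤ t) :
    t - t * q = q + (1 - q) * t - min (q + (1 - q) * t) q := by
  rw [min_add_one_sub_mul_eq_right hq ht]
  ring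

theorem mul_eq_min_mul (hq : 0 ≤ q) (ht : t ≤ 1) : t * q = min (q * t) q := by
  rw [min_eq_left (mul_le_of_le_one_right hq ht), mul_comm]

end OrderedRing

/-- Fix `q, t ∈ (0,1)` and set `t* = q + (1−q)t`, `s† = q·t`. Then `t* > t`,
`s† < t`, and with the independence copula `Π(u,v) = uv` and comonotone copula
`M(u,v) = min(u,v)`: (i) `t − Π(t,q) = t* − M(t*,q)`; (ii) `Π(t,q) = M(s†,q)`. -/
theorem matching_independence_comonotone
    (q t : ℝ) (hq : q ∈ Set.Ioo (0:ℝ) 1) (ht : t ∈ Set.Ioo (0:ℝ) 1)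
    (tstar sdag : ℝ) (htstar : tstar = q + (1 - q) * t) (hsdag : sdag = q * t) :
    t < tstar ∧ sdag < t ∧
    t - t * q = tstar - min tstar q ∧
    t * q = min sdag q := by
  obtain ⟨hq0, hq1⟩ := hq
  obtain ⟨ht0, ht1⟩ := ht
  subst htstar hsdag
  exact ⟨lt_add_one_sub_mul hq0 ht1, mul_lt_of_lt_one_left ht0 hq1,
    sub_mul_eq_add_one_sub_mul_sub_min hq1.le ht0.le, mul_eq_min_mul hq0.le ht1.le⟩
end
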